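/- arXiv:1901.04477 — 6 statements merged into one kernel-verified Lean document; each statement's English description precedes it below -/
import Mathlib

section
/- Let L > 0. Define ω₁ = min{|π + πj/L| : j ∈ ℤ, |π + πj/L| > 0} and inductively ω_{k+1} = min{|π + πj/L| : j ∈ ℤ, |π + πj/L| > ω_k}. Then for every k ≥ 1, the gap satisfies d* ≤ ω_{k+1} − ω_k ≤ π/L, where d* = (π/L) · min{|2L + m| : m ∈ ℤ, 2L + m ≠ 0}. -/
open Real

/-- The next threshold strictly above `t`: the smallest value `|π + πj/L|` exceeding `t`. -/
noncomputable def nextThreshold (L t : ℝ) : ℝ :=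
  sInf {x : ℝ | (∃ j : ℤ, x = |π + π * j / L|) ∧ t < x}

/-- The increasing enumeration of thresholds: `omegaThr L k` is `ω_k` (with `ω_0 = 0`). -/
noncomputable def omegaThr (L : ℝ) : ℕ → ℝ
  | 0 => 0
  | k + 1 => nextThreshold L (omegaThr L k)

/-- `d* = (π/L) · min{|2L + m| : m ∈ ℤ, 2L + m ≠ 0}`. -/
noncomputable def dStar (L : ℝ) : ℝ :=
  (π / L) * sInf {r : ℝ | ∃ m : ℤ, r = |2 * L + (m : ℝ)| ∧ 2 * L + (m : ℝ) ≠ 0}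


/-!
As `|π + πj/L| = (π/L)|L + j|`, the difference of two thresholds is `π/L` times `||L + i| - |L + j||`,
which is either the integer `|i - j|` or `|2L + (i + j)|`. Hence distinct thresholds are at least
`d*` apart, and `d* > 0` because the nonzero points of the discrete set `2L + ℤ` avoid a
neighbourhood of `0`. This separation makes each `ω_{k+1}` an attained minimum, giving the lower
bound, and the upper bound holds because `s ↦ s + π/L` maps thresholds to thresholds.
-/

open Set Metric

lemma abs_abs_sub_abs_eq_or (a b : ℝ) :
    |(|a| - |b|)| = |a - b| ∨ |(|a| - |b|)| = |a + b| := by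
  rcases abs_choice a with ha | ha <;> rcases abs_choice b with hb | hb <;> rw [ha, hb]
  · exact .inl rfl
  · exact .inr (by rw [sub_neg_eq_add])
  · exact .inr (by rw [← abs_neg]; ring_nf)
  · exact .inl (by rw [← abs_neg]; ring_nf)

lemma abs_add_one_eq_or (a : ℝ) : |a| + 1 = |a + 1| ∨ |a| + 1 = |a - 1| := by
  rcases le_total 0 a with ha | ha
  · left; rw [abs_of_nonneg ha, abs_of_nonneg (by linarith)]
  · right; rw [abs_of_nonpos ha, abs_of_nonpos (by linarith)]; ring

lemma one_le_abs_intCast_sub {m n : ℤ} (h : m ≠ n) : (1 : ℝ) ≤ |(m : ℝ) - n| := by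
  rw [← Int.cast_sub, ← Int.cast_abs]
  exact_mod_cast Int.one_le_abs (sub_ne_zero.2 h)

lemma exists_int_add_mem_Ioc (x : ℝ) : ∃ m : ℤ, 0 < x + m ∧ x + m ≤ 1 :=
  ⟨1 - ⌈x⌉, by push_cast; linarith [Int.ceil_lt_add_one x], by push_cast; linarith [Int.le_ceil x]⟩

lemma pairwise_one_le_dist_add_intCast (x : ℝ) :
    (range fun m : ℤ => x + m).Pairwise fun y z => 1 ≤ dist y z := by
  rintro _ ⟨m, rfl⟩ _ ⟨n, rfl⟩ hne
  rw [Real.dist_eq, add_sub_add_left_eq_sub]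
  exact one_le_abs_intCast_sub (by rintro rfl; exact hne rfl)

def nonzeroAbsAddInt (x : ℝ) : Set ℝ := {r | ∃ m : ℤ, r = |x + m| ∧ x + m ≠ 0}

section nonzeroAbsAddInt

variable (x : ℝ)

lemma bddBelow_nonzeroAbsAddInt : BddBelow (nonzeroAbsAddInt x) :=
  ⟨0, by rintro _ ⟨m, rfl, -⟩; exact abs_nonneg _⟩

lemma exists_mem_nonzeroAbsAddInt_le_one : ∃ r ∈ nonzeroAbsAddInt x, r ≤ 1 := by
  obtain ⟨m, hpos, hle⟩ := exists_int_add_mem_Ioc x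
  exact ⟨_, ⟨m, rfl, hpos.ne'⟩, by rwa [abs_of_pos hpos]⟩

lemma sInf_nonzeroAbsAddInt_le_one : sInf (nonzeroAbsAddInt x) ≤ 1 := by
  obtain ⟨r, hr, hr1⟩ := exists_mem_nonzeroAbsAddInt_le_one x
  exact (csInf_le (bddBelow_nonzeroAbsAddInt x) hr).trans hr1

/-- The translates `x + m` other than `0` form a closed set, so they stay away from `0`. -/
lemma sInf_nonzeroAbsAddInt_pos : 0 < sInf (nonzeroAbsAddInt x) := by
  set A := (range fun m : ℤ => x + m) \ {0}
  have hA : IsClosed A :=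
    isClosed_of_pairwise_le_dist one_pos ((pairwise_one_le_dist_add_intCast x).mono sdiff_subset)
  obtain ⟨m, hm, -⟩ := exists_int_add_mem_Ioc x
  have hpos : 0 < infDist 0 A :=
    (hA.notMem_iff_infDist_pos ⟨x + m, ⟨m, rfl⟩, hm.ne'⟩).1 fun h => h.2 rfl
  obtain ⟨r, hr, -⟩ := exists_mem_nonzeroAbsAddInt_le_one x
  refine hpos.trans_le (le_csInf ⟨r, hr⟩ ?_)
  rintro _ ⟨n, rfl, hn⟩
  have hn_mem : x + n ∈ A := ⟨⟨n, rfl⟩, hn⟩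
  simpa only [Real.dist_eq, zero_sub, abs_neg] using infDist_le_dist_of_mem (x := (0 : ℝ)) hn_mem

end nonzeroAbsAddInt

def thresholds (L : ℝ) : Set ℝ := {x | ∃ j : ℤ, x = |π + π * j / L|}

section thresholds

variable {L : ℝ}

lemma dStar_eq (L : ℝ) : dStar L = π / L * sInf (nonzeroAbsAddInt (2 * L)) := rfl

lemma dStar_pos (hL : 0 < L) : 0 < dStar L :=
  mul_pos (div_pos pi_pos hL) (sInf_nonzeroAbsAddInt_pos _)

lemma mem_thresholds_iff (hL : 0 < L) {x : ℝ} :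
    x ∈ thresholds L ↔ ∃ j : ℤ, x = π / L * |L + j| := by
  have h (j : ℤ) : |π + π * j / L| = π / L * |L + j| := by
    rw [show π + π * j / L = π / L * (L + j) by field_simp, abs_mul,
      abs_of_pos (div_pos pi_pos hL)]
  simp only [thresholds, mem_ofPred_eq, h]

lemma dStar_le_abs_sub (hL : 0 < L) {s t : ℝ} (hs : s ∈ thresholds L) (ht : t ∈ thresholds L)
    (hst : s ≠ t) : dStar L ≤ |s - t| := by
  obtain ⟨i, rfl⟩ := (mem_thresholds_iff hL).1 hs
  obtain ⟨j, rfl⟩ := (mem_thresholds_iff hL).1 ht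
  rw [dStar_eq, ← mul_sub, abs_mul, abs_of_pos (div_pos pi_pos hL)]
  gcongr
  have hne : |(|L + i| - |L + j|)| ≠ 0 := abs_ne_zero.2 (sub_ne_zero.2 fun h => hst (by rw [h]))
  rcases abs_abs_sub_abs_eq_or (L + i) (L + j) with h | h <;> rw [h] at hne ⊢
  · rw [add_sub_add_left_eq_sub] at hne ⊢
    exact (sInf_nonzeroAbsAddInt_le_one _).trans
      (one_le_abs_intCast_sub (by rintro rfl; simp at hne))
  · rw [show L + i + (L + j) = 2 * L + ((i + j : ℤ) : ℝ) by push_cast; ring] at hne ⊢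
    exact csInf_le (bddBelow_nonzeroAbsAddInt _) ⟨i + j, rfl, abs_ne_zero.1 hne⟩

lemma exists_mem_thresholds_gt (hL : 0 < L) (t : ℝ) : ∃ x ∈ thresholds L, t < x := by
  obtain ⟨n, hn⟩ := exists_nat_gt (t / (π / L))
  refine ⟨_, (mem_thresholds_iff hL).2 ⟨n, rfl⟩, ?_⟩
  rw [div_lt_iff₀' (div_pos pi_pos hL)] at hn
  calc t < π / L * n := hn
    _ ≤ π / L * |L + (n : ℤ)| := by
      gcongr
      push_cast
      exact le_abs.2 (.inl (by linarith))

lemma add_pi_div_mem_thresholds (hL : 0 < L) {s : ℝ} (hs : s ∈ thresholds L) :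
    s + π / L ∈ thresholds L := by
  obtain ⟨j, rfl⟩ := (mem_thresholds_iff hL).1 hs
  refine (mem_thresholds_iff hL).2 ?_
  rcases abs_add_one_eq_or (L + j) with h | h
  · exact ⟨j + 1, by push_cast; rw [← add_assoc, ← h]; ring⟩
  · exact ⟨j - 1, by push_cast; rw [← add_sub_assoc, ← h]; ring⟩

lemma nextThreshold_le {t x : ℝ} (hx : x ∈ thresholds L) (htx : t < x) :
    nextThreshold L t ≤ x :=
  csInf_le ⟨t, fun _ hy => hy.2.le⟩ ⟨hx, htx⟩

/-- The thresholds are `d*`-separated, hence closed, so the infimum defining the next one is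
attained. -/
lemma nextThreshold_mem (hL : 0 < L) (t : ℝ) :
    nextThreshold L t ∈ thresholds L ∧ t < nextThreshold L t := by
  have hclosed : IsClosed {x | x ∈ thresholds L ∧ t < x} :=
    isClosed_of_pairwise_le_dist (dStar_pos hL) fun x hx y hy hxy =>
      dStar_le_abs_sub hL hx.1 hy.1 hxy
  obtain ⟨x, hx, htx⟩ := exists_mem_thresholds_gt hL t
  exact hclosed.csInf_mem ⟨x, hx, htx⟩ ⟨t, fun y hy => hy.2.le⟩

end thresholds

theorem stmt0 (L : ℝ) (hL : 0 < L) (k : ℕ) (hk : 1 ≤ k) :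
    dStar L ≤ omegaThr L (k + 1) - omegaThr L k ∧
      omegaThr L (k + 1) - omegaThr L k ≤ π / L := by
  obtain ⟨k, rfl⟩ := Nat.exists_eq_add_of_le' hk
  have hk_mem : omegaThr L (k + 1) ∈ thresholds L := (nextThreshold_mem hL _).1
  obtain ⟨hnext_mem, hlt⟩ := nextThreshold_mem hL (omegaThr L (k + 1))
  change dStar L ≤ nextThreshold L _ - _ ∧ nextThreshold L _ - _ ≤ π / L
  constructor
  · simpa [abs_of_pos (sub_pos.2 hlt)] using dStar_le_abs_sub hL hnext_mem hk_mem hlt.ne'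
  · have := nextThreshold_le (add_pi_div_mem_thresholds hL hk_mem)
      (lt_add_of_pos_right _ (div_pos pi_pos hL))
    linarith
end

section
/- Let λ ∈ ℂ, κ ∈ ℝ, ω ≠ 0 with λ² + κ² = ω², and suppose the function W(x,y) = e^{iλx}(e^{iκy}, −ω⁻¹(λ+iκ)e^{iκy}, −ie^{−iκy}, −iω⁻¹(λ+iκ)e^{−iκy}) satisfies the armchair boundary conditions u(x,0) − iu'(x,0) = 0, −iv(x,0) + v'(x,0) = 0, e^{−i2πL}u(x,L) − iu'(x,L) = 0, −ie^{−i2πL}v(x,L) + v'(x,L) = 0 for all x. Then κ = π + πj/L for some integer j. -/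
/-!
At `x = 0` the condition on `u` at `y = L` reads `e^{-2πiL} e^{iκL} = e^{-iκL}`, that is
`e^{2iκL} = e^{2πiL}`; comparing arguments gives `2κL ∈ 2πL + 2πℤ`.
-/

open Complex

lemma exp_two_mul_eq_of_exp_neg_mul_exp_eq {θ φ : ℂ} (h : exp (-θ) * exp φ = exp (-φ)) :
    exp (2 * φ) = exp θ :=
  calc exp (2 * φ) = exp θ * (exp (-θ) * exp φ) * exp φ := by
        simp only [← Complex.exp_add]; ring_nf
    _ = exp θ := by
        rw [h, mul_assoc, ← Complex.exp_add, neg_add_cancel, Complex.exp_zero, mul_one]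

lemma exists_int_eq_pi_add_of_exp_eq {κ L : ℝ} (hL : L ≠ 0)
    (h : exp (2 * (I * κ * L)) = exp (I * (2 * Real.pi * L))) :
    ∃ j : ℤ, κ = Real.pi + Real.pi * j / L := by
  obtain ⟨n, hn⟩ := exp_eq_exp_iff_exists_int.mp h
  have him : 2 * (κ * L) = 2 * Real.pi * L + n * (2 * Real.pi) := by
    simpa using congrArg im hn
  exact ⟨n, by field_simp; linarith⟩

open Complex Real in
theorem stmt6_general (L : ℝ) (hL : 0 < L) (lam : ℂ) (κ : ℝ)
    -- the components (u, v, u', v') of the plane wave W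
    (u v u' v' : ℝ × ℝ → ℂ)
    (hu : u = fun p => exp (I * lam * p.1) * exp (I * κ * p.2))
    (hu' : u' = fun p => exp (I * lam * p.1) * (-I * exp (-(I * κ * p.2))))
    (hbcL : ∀ x : ℝ, exp (-(I * (2 * π * L))) * u (x, L) - I * u' (x, L) = 0 ∧
      -(I * exp (-(I * (2 * π * L))) * v (x, L)) + v' (x, L) = 0) :
    ∃ j : ℤ, κ = π + π * j / L := by
  obtain ⟨hbc, -⟩ := hbcL 0
  subst hu hu'
  simp only [ofReal_zero, mul_zero, Complex.exp_zero, one_mul] at hbc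
  have hphase : exp (-(I * (2 * π * L))) * exp (I * κ * L) = exp (-(I * κ * L)) := by
    linear_combination hbc - exp (-(I * κ * L)) * I_sq
  exact exists_int_eq_pi_add_of_exp_eq hL.ne' (exp_two_mul_eq_of_exp_neg_mul_exp_eq hphase)

open Complex Real in
theorem stmt6 (L : ℝ) (hL : 0 < L) (ω : ℝ) (hω : ω ≠ 0) (lam : ℂ) (κ : ℝ)
    (hdisp : lam ^ 2 + (κ : ℂ) ^ 2 = (ω : ℂ) ^ 2)
    -- the components (u, v, u', v') of the plane wave W
    (u v u' v' : ℝ × ℝ → ℂ)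
    (hu : u = fun p => exp (I * lam * p.1) * exp (I * κ * p.2))
    (hv : v = fun p =>
      exp (I * lam * p.1) * (-((ω : ℂ)⁻¹ * (lam + I * κ)) * exp (I * κ * p.2)))
    (hu' : u' = fun p => exp (I * lam * p.1) * (-I * exp (-(I * κ * p.2))))
    (hv' : v' = fun p =>
      exp (I * lam * p.1) * (-(I * (ω : ℂ)⁻¹ * (lam + I * κ)) * exp (-(I * κ * p.2))))
    -- armchair boundary conditions
    (hbc0 : ∀ x : ℝ, u (x, 0) - I * u' (x, 0) = 0 ∧ -(I * v (x, 0)) + v' (x, 0) = 0)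
    (hbcL : ∀ x : ℝ, exp (-(I * (2 * π * L))) * u (x, L) - I * u' (x, L) = 0 ∧
      -(I * exp (-(I * (2 * π * L))) * v (x, L)) + v' (x, L) = 0) :
    ∃ j : ℤ, κ = π + π * j / L :=
  stmt6_general L hL lam κ u v u' v' hu hu' hbcL
end

section
/- Let w = (u,v,u',v') and w̃ = (ũ,ṽ,ũ',ṽ') be two solutions of the Dirac system D w = ω w on the strip Π = (0,L)×ℝ satisfying the armchair boundary conditions. Define q_a(w,w̃) = −i∫₀ᴸ [ conj(ũ)(a,y)v(a,y) + conj(ṽ)(a,y)u(a,y) − conj(ũ')(a,y)v'(a,y) − conj(ṽ')(a,y)u'(a,y) ] dy. Then q_a(w,w̃) is independent of a ∈ ℝ. -/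
noncomputable def px (f : ℝ × ℝ → ℂ) (p : ℝ × ℝ) : ℂ := fderiv ℝ f p (1, 0)
noncomputable def py (f : ℝ × ℝ → ℂ) (p : ℝ × ℝ) : ℂ := fderiv ℝ f p (0, 1)

/-- The symplectic form `q_a(w, w̃)` evaluated at the cross-section `x = a`. -/
noncomputable def qform (L a : ℝ) (u v u' v' tu tv tu' tv' : ℝ × ℝ → ℂ) : ℂ :=
  -Complex.I * ∫ y in (0: ℝ)..L,
    ((starRingEnd ℂ) (tu (a, y)) * v (a, y) + (starRingEnd ℂ) (tv (a, y)) * u (a, y)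
      - (starRingEnd ℂ) (tu' (a, y)) * v' (a, y) - (starRingEnd ℂ) (tv' (a, y)) * u' (a, y))

/-!
Write `F` for the integrand of `q_a` and `G = i (conj ũ v − conj ṽ u + conj ũ' v' − conj ṽ' u')`.
For two solutions of the same Dirac system the pointwise conservation law `∂ₓF = ∂_y G` holds,
so `d/da ∫₀ᴸ F(a, y) dy = G(a, L) − G(a, 0)`. The armchair conditions express `(u', v')` as a
unimodular multiple of `(u, v)` on each edge of the strip, and this makes `G` vanish there.
-/

open Complex ComplexConjugate

section Slices

variable {E : Type*} [NormedAddCommGroup E] [NormedSpace ℝ E]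

lemma hasDerivAt_intervalIntegral_slice {F : ℝ × ℝ → E} (hF : ContDiff ℝ 1 F) (a b x₀ : ℝ) :
    HasDerivAt (fun x => ∫ y in a..b, F (x, y)) (∫ y in a..b, fderiv ℝ F (x₀, y) (1, 0)) x₀ := by
  have hFx : Continuous fun p => fderiv ℝ F p (1, 0) :=
    (hF.continuous_fderiv one_ne_zero).clm_apply continuous_const
  obtain ⟨C, hC⟩ := ((isCompact_closedBall x₀ 1).prod isCompact_uIcc).exists_bound_of_continuousOn
    hFx.continuousOn (f := fun p => fderiv ℝ F p (1, 0)) (s := _ ×ˢ Set.uIcc a b)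
  refine (intervalIntegral.hasDerivAt_integral_of_dominated_loc_of_deriv_le (bound := fun _ => C)
    (Metric.ball_mem_nhds x₀ one_pos)
    (.of_forall fun x => (hF.continuous.comp (.prodMk_right x)).aestronglyMeasurable)
    ((hF.continuous.comp (.prodMk_right x₀)).intervalIntegrable a b)
    (hFx.comp (.prodMk_right x₀)).aestronglyMeasurable
    (.of_forall fun y hy x hx =>
      hC (x, y) ⟨Metric.ball_subset_closedBall hx, Set.uIoc_subset_uIcc hy⟩)
    intervalIntegrable_const
    (.of_forall fun y _ x _ => ?_)).2
  exact (hF.differentiable one_ne_zero (x, y)).hasFDerivAt.comp_hasDerivAt x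
    ((hasDerivAt_id x).prodMk (hasDerivAt_const x y))

lemma intervalIntegral_fderiv_snd_eq_sub [CompleteSpace E] {G : ℝ × ℝ → E}
    (hG : ContDiff ℝ 1 G) (x a b : ℝ) :
    ∫ y in a..b, fderiv ℝ G (x, y) (0, 1) = G (x, b) - G (x, a) := by
  refine intervalIntegral.integral_eq_sub_of_hasDerivAt (f := fun y => G (x, y)) (fun y _ => ?_) ?_
  · exact (hG.differentiable one_ne_zero (x, y)).hasFDerivAt.comp_hasDerivAt y
      ((hasDerivAt_const y x).prodMk (hasDerivAt_id y))
  · exact (((hG.continuous_fderiv one_ne_zero).clm_apply continuous_const).comp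
      (.prodMk_right x)).intervalIntegrable a b

theorem intervalIntegral_slice_eq_of_fderiv_fst_eq_fderiv_snd [CompleteSpace E]
    {F G : ℝ × ℝ → E} {a b : ℝ} (hF : ContDiff ℝ 1 F) (hG : ContDiff ℝ 1 G)
    (hFG : ∀ p, fderiv ℝ F p (1, 0) = fderiv ℝ G p (0, 1)) (hGab : ∀ x, G (x, a) = G (x, b))
    (x x' : ℝ) : ∫ y in a..b, F (x, y) = ∫ y in a..b, F (x', y) := by
  have hderiv : ∀ x₀, HasDerivAt (fun x => ∫ y in a..b, F (x, y)) 0 x₀ := fun x₀ => by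
    simpa only [hFG, intervalIntegral_fderiv_snd_eq_sub hG, hGab, sub_self]
      using hasDerivAt_intervalIntegral_slice hF a b x₀
  exact is_const_of_deriv_eq_zero (fun x => (hderiv x).differentiableAt)
    (fun x => (hderiv x).deriv) x x'

end Slices

section Conjugation

variable {E : Type*} [NormedAddCommGroup E] [NormedSpace ℝ E]

@[fun_prop]
lemma ContDiff.conj {n : WithTop ℕ∞} {f : E → ℂ} (hf : ContDiff ℝ n f) :
    ContDiff ℝ n fun x => conj (f x) :=
  conjCLE.contDiff.comp hf

lemma fderiv_conj_mul_apply {f g : E → ℂ} {p : E} (hf : DifferentiableAt ℝ f p)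
    (hg : DifferentiableAt ℝ g p) (w : E) :
    fderiv ℝ (fun q => conj (f q) * g q) p w
      = conj (fderiv ℝ f p w) * g p + conj (f p) * fderiv ℝ g p w := by
  have hconj : fderiv ℝ (fun q => conj (f q)) p w = conj (fderiv ℝ f p w) := by
    rw [show (fun q => conj (f q)) = fun q => star (f q) from rfl, fderiv_star]
    rfl
  rw [fderiv_fun_mul (c := fun q => conj (f q)) hf.star hg]
  simp only [add_apply, smul_apply, hconj, smul_eq_mul]
  ring

end Conjugation

/-- `D w = ω w` for `w = (u, v, u', v')`. -/
def IsDiracSolution (ω : ℝ) (u v u' v' : ℝ × ℝ → ℂ) : Prop :=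
  ∀ p : ℝ × ℝ,
    I * px v p + py v p = ω * u p ∧
    I * px u p - py u p = ω * v p ∧
    -(I * px v' p) + py v' p = ω * u' p ∧
    -(I * px u' p) - py u' p = ω * v' p

/-- Solved for the primed values, the hypotheses make the last two terms `-|e|²` times the
first two. -/
lemma conj_mul_sub_conj_mul_eq_zero_of_armchair {e u v u' v' tu tv tu' tv' : ℂ} (he : ‖e‖ = 1)
    (h₁ : e * u - I * u' = 0) (h₂ : -(I * e * v) + v' = 0)
    (th₁ : e * tu - I * tu' = 0) (th₂ : -(I * e * tv) + tv' = 0) :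
    conj tu * v - conj tv * u + conj tu' * v' - conj tv' * u' = 0 := by
  have he' : conj e * e = 1 := by rw [mul_comm, mul_conj', he]; simp
  obtain rfl : u' = -I * e * u := by linear_combination I * h₁ + u' * I_sq
  obtain rfl : v' = I * e * v := by linear_combination h₂
  obtain rfl : tu' = -I * e * tu := by linear_combination I * th₁ + tu' * I_sq
  obtain rfl : tv' = I * e * tv := by linear_combination th₂
  simp only [map_mul, map_neg, conj_I]
  linear_combination (conj tv * u - conj tu * v) * he'
    + (conj tu * v - conj tv * u) * conj e * e * I_sq

section Dirac

variable (u v u' v' tu tv tu' tv' : ℝ × ℝ → ℂ)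

noncomputable def diracDensity : ℝ × ℝ → ℂ := fun p =>
  conj (tu p) * v p + conj (tv p) * u p - conj (tu' p) * v' p - conj (tv' p) * u' p

noncomputable def diracFlux : ℝ × ℝ → ℂ := fun p =>
  I * (conj (tu p) * v p - conj (tv p) * u p + conj (tu' p) * v' p - conj (tv' p) * u' p)

variable {u v u' v' tu tv tu' tv'}

lemma px_diracDensity_eq_py_diracFlux {ω : ℝ}
    (hu : Differentiable ℝ u) (hv : Differentiable ℝ v) (hu' : Differentiable ℝ u')
    (hv' : Differentiable ℝ v') (htu : Differentiable ℝ tu) (htv : Differentiable ℝ tv)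
    (htu' : Differentiable ℝ tu') (htv' : Differentiable ℝ tv')
    (hw : IsDiracSolution ω u v u' v') (htw : IsDiracSolution ω tu tv tu' tv') (p : ℝ × ℝ) :
    px (diracDensity u v u' v' tu tv tu' tv') p = py (diracFlux u v u' v' tu tv tu' tv') p := by
  obtain ⟨h₁, h₂, h₃, h₄⟩ := hw p
  obtain ⟨th₁, th₂, th₃, th₄⟩ := htw p
  replace th₁ := congrArg conj th₁
  replace th₂ := congrArg conj th₂
  replace th₃ := congrArg conj th₃
  replace th₄ := congrArg conj th₄
  simp only [map_add, map_sub, map_mul, map_neg, conj_I, conj_ofReal] at th₁ th₂ th₃ th₄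
  simp only [px, py] at *
  unfold diracDensity diracFlux
  simp (disch := fun_prop) only [fderiv_fun_sub, fderiv_fun_add, fderiv_const_mul, sub_apply,
    add_apply, smul_apply, smul_eq_mul, fderiv_conj_mul_apply]
  linear_combination (norm := (ring_nf; simp only [I_sq]; ring))
    (-I * conj (tu p)) * h₁ + (-I * conj (tv p)) * h₂
      + (-I * conj (tu' p)) * h₃ + (-I * conj (tv' p)) * h₄
      + (I * u p) * th₁ + (I * v p) * th₂ + (I * u' p) * th₃ + (I * v' p) * th₄

lemma diracFlux_eq_zero_of_armchair {e : ℂ} (he : ‖e‖ = 1) {p : ℝ × ℝ}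
    (h₁ : e * u p - I * u' p = 0) (h₂ : -(I * e * v p) + v' p = 0)
    (th₁ : e * tu p - I * tu' p = 0) (th₂ : -(I * e * tv p) + tv' p = 0) :
    diracFlux u v u' v' tu tv tu' tv' p = 0 := by
  rw [diracFlux, conj_mul_sub_conj_mul_eq_zero_of_armchair he h₁ h₂ th₁ th₂, mul_zero]

end Dirac

open Complex Real in
theorem stmt8_general (L : ℝ) (ω : ℝ)
    (u v u' v' tu tv tu' tv' : ℝ × ℝ → ℂ)
    (hreg : ContDiff ℝ 1 u ∧ ContDiff ℝ 1 v ∧ ContDiff ℝ 1 u' ∧ ContDiff ℝ 1 v' ∧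
      ContDiff ℝ 1 tu ∧ ContDiff ℝ 1 tv ∧ ContDiff ℝ 1 tu' ∧ ContDiff ℝ 1 tv')
    -- w = (u,v,u',v') solves the Dirac system D w = ω w
    (hw : ∀ p : ℝ × ℝ,
      I * px v p + py v p = ω * u p ∧
      I * px u p - py u p = ω * v p ∧
      -(I * px v' p) + py v' p = ω * u' p ∧
      -(I * px u' p) - py u' p = ω * v' p)
    -- w̃ = (tu,tv,tu',tv') solves the Dirac system D w̃ = ω w̃
    (htw : ∀ p : ℝ × ℝ,
      I * px tv p + py tv p = ω * tu p ∧
      I * px tu p - py tu p = ω * tv p ∧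
      -(I * px tv' p) + py tv' p = ω * tu' p ∧
      -(I * px tu' p) - py tu' p = ω * tv' p)
    -- armchair boundary conditions for w
    (hbc : ∀ x : ℝ,
      u (x, 0) - I * u' (x, 0) = 0 ∧ -(I * v (x, 0)) + v' (x, 0) = 0 ∧
      exp (-(I * (2 * π * L))) * u (x, L) - I * u' (x, L) = 0 ∧
      -(I * exp (-(I * (2 * π * L))) * v (x, L)) + v' (x, L) = 0)
    -- armchair boundary conditions for w̃
    (htbc : ∀ x : ℝ,
      tu (x, 0) - I * tu' (x, 0) = 0 ∧ -(I * tv (x, 0)) + tv' (x, 0) = 0 ∧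
      exp (-(I * (2 * π * L))) * tu (x, L) - I * tu' (x, L) = 0 ∧
      -(I * exp (-(I * (2 * π * L))) * tv (x, L)) + tv' (x, L) = 0) :
    ∀ a b : ℝ, qform L a u v u' v' tu tv tu' tv' = qform L b u v u' v' tu tv tu' tv' := by
  obtain ⟨hu, hv, hu', hv', htu, htv, htu', htv'⟩ := hreg
  have hflux (x : ℝ) : diracFlux u v u' v' tu tv tu' tv' (x, 0)
      = diracFlux u v u' v' tu tv tu' tv' (x, L) := by
    obtain ⟨h₀u, h₀v, hLu, hLv⟩ := hbc x
    obtain ⟨th₀u, th₀v, thLu, thLv⟩ := htbc x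
    rw [diracFlux_eq_zero_of_armchair (e := 1) norm_one (by rwa [one_mul]) (by rwa [mul_one])
        (by rwa [one_mul]) (by rwa [mul_one]),
      diracFlux_eq_zero_of_armchair (by simp [norm_exp]) hLu hLv thLu thLv]
  have hcons := intervalIntegral_slice_eq_of_fderiv_fst_eq_fderiv_snd
    (by unfold diracDensity; fun_prop) (by unfold diracFlux; fun_prop)
    (px_diracDensity_eq_py_diracFlux (hu.differentiable one_ne_zero)
      (hv.differentiable one_ne_zero) (hu'.differentiable one_ne_zero)
      (hv'.differentiable one_ne_zero) (htu.differentiable one_ne_zero)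
      (htv.differentiable one_ne_zero) (htu'.differentiable one_ne_zero)
      (htv'.differentiable one_ne_zero) hw htw) hflux
  exact fun a b => congrArg (-I * ·) (hcons a b)

open Complex Real in
theorem stmt8 (L : ℝ) (hL : 0 < L) (ω : ℝ)
    (u v u' v' tu tv tu' tv' : ℝ × ℝ → ℂ)
    (hreg : ContDiff ℝ 1 u ∧ ContDiff ℝ 1 v ∧ ContDiff ℝ 1 u' ∧ ContDiff ℝ 1 v' ∧
      ContDiff ℝ 1 tu ∧ ContDiff ℝ 1 tv ∧ ContDiff ℝ 1 tu' ∧ ContDiff ℝ 1 tv')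
    -- w = (u,v,u',v') solves the Dirac system D w = ω w
    (hw : ∀ p : ℝ × ℝ,
      I * px v p + py v p = ω * u p ∧
      I * px u p - py u p = ω * v p ∧
      -(I * px v' p) + py v' p = ω * u' p ∧
      -(I * px u' p) - py u' p = ω * v' p)
    -- w̃ = (tu,tv,tu',tv') solves the Dirac system D w̃ = ω w̃
    (htw : ∀ p : ℝ × ℝ,
      I * px tv p + py tv p = ω * tu p ∧
      I * px tu p - py tu p = ω * tv p ∧
      -(I * px tv' p) + py tv' p = ω * tu' p ∧
      -(I * px tu' p) - py tu' p = ω * tv' p)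
    -- armchair boundary conditions for w
    (hbc : ∀ x : ℝ,
      u (x, 0) - I * u' (x, 0) = 0 ∧ -(I * v (x, 0)) + v' (x, 0) = 0 ∧
      exp (-(I * (2 * π * L))) * u (x, L) - I * u' (x, L) = 0 ∧
      -(I * exp (-(I * (2 * π * L))) * v (x, L)) + v' (x, L) = 0)
    -- armchair boundary conditions for w̃
    (htbc : ∀ x : ℝ,
      tu (x, 0) - I * tu' (x, 0) = 0 ∧ -(I * tv (x, 0)) + tv' (x, 0) = 0 ∧
      exp (-(I * (2 * π * L))) * tu (x, L) - I * tu' (x, L) = 0 ∧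
      -(I * exp (-(I * (2 * π * L))) * tv (x, L)) + tv' (x, L) = 0) :
    ∀ a b : ℝ, qform L a u v u' v' tu tv tu' tv' = qform L b u v u' v' tu tv tu' tv' :=
  stmt8_general L ω u v u' v' tu tv tu' tv' hreg hw htw hbc htbc
end

section
/- Let q: V × V → ℂ be a sesquilinear anti-Hermitian form on a complex vector space V, and suppose vectors V₁,…,V_N, W₁,…,W_N ∈ V satisfy q(W_j, W_k) = i·δ_{jk}, q(V_j, V_k) = −i·δ_{jk}, q(W_j, V_k) = 0. If S ∈ ℂ^{N×N} and the vector z_j = V_j + Σ_k S_{jk}W_k satisfies q applied pairwise equals zero, i.e., q(z_j, z_k) = 0 for all j,k, then S is unitary: S·S* = I. -/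
/-!
Viewing `q` as a sesquilinear form, `q (z j) (z l)` expands to `-i δ_{jl} + i (S Sᴴ)_{jl}`:
the mixed terms vanish since `q (W j) (v k) = 0`, and hence by anti-Hermiticity also
`q (v j) (W k) = 0`. So `q (z j) (z l) = 0` forces `S Sᴴ = 1`.
-/

open Matrix

section Sesquilinear

variable {R V ι : Type*} [CommRing R] [StarRing R] [AddCommMonoid V] [Module R V] [Fintype ι]
  (B : V →ₗ[R] V →ₗ⋆[R] R)

theorem sesq_sum_smul_sum_smul_of_orthogonal [DecidableEq ι] {w : ι → V} {c : R}
    (hw : ∀ i k, B (w i) (w k) = if i = k then c else 0) (a b : ι → R) :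
    B (∑ k, a k • w k) (∑ k, b k • w k) = c * ∑ k, a k * star (b k) := by
  simp [map_sum, hw, Finset.mul_sum, starRingEnd_apply, mul_comm, mul_assoc]

theorem sesq_add_sum_smul_add_sum_smul [DecidableEq ι] {v w : ι → V} {c d : R}
    (hww : ∀ i k, B (w i) (w k) = if i = k then c else 0)
    (hvv : ∀ i k, B (v i) (v k) = if i = k then d else 0)
    (hwv : ∀ i k, B (w i) (v k) = 0) (hvw : ∀ i k, B (v i) (w k) = 0)
    (S : Matrix ι ι R) (j l : ι) :
    B (v j + ∑ k, S j k • w k) (v l + ∑ k, S l k • w k) =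
      d * (1 : Matrix ι ι R) j l + c * (S * Sᴴ) j l := by
  have hvS : B (v j) (∑ k, S l k • w k) = 0 := by simp [map_sum, hvw]
  have hSv : B (∑ k, S j k • w k) (v l) = 0 := by simp [map_sum, hwv]
  simp only [map_add, LinearMap.add_apply, hvS, hSv, sesq_sum_smul_sum_smul_of_orthogonal B hww,
    hvv, one_apply, mul_apply, conjTranspose_apply, mul_ite, mul_one, mul_zero, add_zero, zero_add]

end Sesquilinear

theorem stmt12 {V : Type*} [AddCommGroup V] [Module ℂ V] (N : ℕ)
    (q : V → V → ℂ)
    -- sesquilinearity: additive and linear in first argument,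
    (hadd₁ : ∀ x y z : V, q (x + y) z = q x z + q y z)
    (hsmul₁ : ∀ (c : ℂ) (x y : V), q (c • x) y = c * q x y)
    -- conjugate-linear in the second argument,
    (hadd₂ : ∀ x y z : V, q x (y + z) = q x y + q x z)
    (hsmul₂ : ∀ (c : ℂ) (x y : V), q x (c • y) = (starRingEnd ℂ) c * q x y)
    -- anti-Hermitian
    (hanti : ∀ x y : V, q x y = -(starRingEnd ℂ) (q y x))
    (W v : Fin N → V)
    (hWW : ∀ j k, q (W j) (W k) = if j = k then Complex.I else 0)
    (hVV : ∀ j k, q (v j) (v k) = if j = k then -Complex.I else 0)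
    (hWV : ∀ j k, q (W j) (v k) = 0)
    (S : Matrix (Fin N) (Fin N) ℂ)
    (z : Fin N → V) (hz : ∀ j, z j = v j + ∑ k, S j k • W k)
    (hq0 : ∀ j k, q (z j) (z k) = 0) :
    S * S.conjTranspose = 1 := by
  let B : V →ₗ[ℂ] V →ₗ⋆[ℂ] ℂ := LinearMap.mk₂'ₛₗ _ _ q hadd₁ hsmul₁ hadd₂ hsmul₂
  have hVW : ∀ j k, q (v j) (W k) = 0 := fun j k => by
    rw [hanti, hWV, map_zero, neg_zero]
  ext j l
  have hexpand : q (z j) (z l) = -Complex.I * (1 : Matrix (Fin N) (Fin N) ℂ) j l +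
      Complex.I * (S * Sᴴ) j l := by
    rw [hz, hz]
    exact sesq_add_sum_smul_add_sum_smul B hWW hVV hWV hVW S j l
  rw [hq0, neg_mul, neg_add_eq_sub, eq_comm, sub_eq_zero] at hexpand
  exact mul_left_cancel₀ Complex.I_ne_zero hexpand
end

section
/- Let S be a unitary 2N × 2N complex matrix written in block form S = [[S_••, S_•†],[S_†•, S_††]] with S_†† of size 2×2, and let d ∈ ℂ with |d| = 1. If a row vector a_† ∈ ℂ² satisfies a_†(S_†† + dΥ) = 0 where Υ = [[0,1],[1,0]], then a_† S_†• = 0. -/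
/-!
Unitarity of `S` preserves the norm of the row vector `(0, a)`, whose image is
`(a S₂₁, a S₂₂)`. The hypothesis says `a S₂₂ = a (-d Υ)`, and `-d Υ` is itself unitary since
`|d| = 1`, so `a S₂₂` already carries the whole norm of `a`; hence `a S₂₁` has norm zero.
-/

open Matrix ComplexOrder

theorem Matrix.star_vecMul_dotProduct_vecMul_of_mul_conjTranspose_eq_one {m α : Type*}
    [Fintype m] [DecidableEq m] [CommRing α] [StarRing α] {U : Matrix m m α} (hU : U * Uᴴ = 1) (v : m → α) :
    star (v ᵥ* U) ⬝ᵥ (v ᵥ* U) = star v ⬝ᵥ v := by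
  rw [star_vecMul, dotProduct_comm, ← dotProduct_mulVec, mulVec_mulVec, hU, one_mulVec,
    dotProduct_comm]

theorem Matrix.sumElim_zero_vecMul {m n α : Type*} [Fintype m] [Fintype n]
    [NonUnitalNonAssocSemiring α] (S : Matrix (n ⊕ m) (n ⊕ m) α) (a : m → α) :
    Sum.elim 0 a ᵥ* S = Sum.elim (a ᵥ* S.toBlocks₂₁) (a ᵥ* S.toBlocks₂₂) := by
  conv_lhs => rw [← fromBlocks_toBlocks S]
  rw [vecMul_fromBlocks, Sum.elim_comp_inl, Sum.elim_comp_inr, zero_vecMul, zero_vecMul,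
    zero_add, zero_add]

theorem Matrix.smul_mul_conjTranspose_smul_eq_one_of_norm_eq_one {m : Type*} [Fintype m] [DecidableEq m]
    {U : Matrix m m ℂ} (hU : U * Uᴴ = 1) {d : ℂ} (hd : ‖d‖ = 1) :
    (d • U) * (d • U)ᴴ = 1 := by
  have hdd : d * star d = 1 := by
    rw [Complex.star_def, Complex.mul_conj', hd]
    norm_num
  rw [conjTranspose_smul, smul_mul_smul_comm, hdd, hU, one_smul]

theorem stmt13 (n : ℕ)
    (S : Matrix (Fin n ⊕ Fin 2) (Fin n ⊕ Fin 2) ℂ)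
    (hS : S * S.conjTranspose = 1 ∧ S.conjTranspose * S = 1)
    (d : ℂ) (hd : ‖d‖ = 1)
    (a : Fin 2 → ℂ)
    (ha : Matrix.vecMul a (S.toBlocks₂₂ + d • !![0, 1; 1, 0]) = 0) :
    Matrix.vecMul a S.toBlocks₂₁ = 0 := by
  have hΥ : !![(0 : ℂ), 1; 1, 0] * !![(0 : ℂ), 1; 1, 0]ᴴ = 1 := by
    ext i j; fin_cases i <;> fin_cases j <;> simp [mul_apply, Fin.sum_univ_two]
  have hS₂₂ : a ᵥ* S.toBlocks₂₂ = a ᵥ* ((-d) • !![0, 1; 1, 0]) := by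
    rw [vecMul_add, add_eq_zero_iff_eq_neg] at ha
    rw [ha, neg_smul, vecMul_neg]
  have h₂₂ : star (a ᵥ* S.toBlocks₂₂) ⬝ᵥ (a ᵥ* S.toBlocks₂₂) = star a ⬝ᵥ a := by
    rw [hS₂₂]
    exact star_vecMul_dotProduct_vecMul_of_mul_conjTranspose_eq_one
      (smul_mul_conjTranspose_smul_eq_one_of_norm_eq_one hΥ (by rwa [norm_neg])) a
  have hnorm := star_vecMul_dotProduct_vecMul_of_mul_conjTranspose_eq_one hS.1 (Sum.elim 0 a)
  rw [sumElim_zero_vecMul, Function.star_sumElim, Function.star_sumElim,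
    sumElim_dotProduct_sumElim, sumElim_dotProduct_sumElim, star_zero, zero_dotProduct,
    zero_add, h₂₂, add_eq_right] at hnorm
  exact dotProduct_star_self_eq_zero.mp hnorm
end

section
/- Let u, u' : Π → ℂ be C¹ functions on the strip Π = (0,L) × ℝ decaying at infinity, satisfying the boundary conditions u(x,0) − iu'(x,0) = 0 and e^{−i2πL}u(x,L) − iu'(x,L) = 0 for all x. Then ∫_Π (|(i∂_x − ∂_y)u|² + |(−i∂_x − ∂_y)u'|²) dxdy = ∫_Π (|∇u|² + |∇u'|²) dxdy. -/
/-!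
Expanding the squares, the two sides differ by `2 ∫_Π (J u - J u')`, where
`J f = Im (conj f_x · f_y)` (`jacDet f`) is the Jacobian determinant of `f` viewed as a map
`ℝ² → ℝ²`. Although `J f` is not visibly a divergence for `C¹` functions, its integral over the
strip is a boundary term. Put `P(s, t) = ∫ conj (f_x (x, s)) · f (x, t) dx` (`slicePairing f s t`).
Integration by parts in `x` gives `P(s, t) = -conj P(t, s)`, so `Im P` is symmetric, and a
symmetric function whose partial derivative `Im ∫ conj (f_x (x, s)) · f_y (x, t) dx` is continuous
has diagonal derivative `2 ∫ J f (x, y) dx`; no second derivative of `f` is needed. Hence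
`2 ∫_Π J f = Im P(L, L) - Im P(0, 0)`. On each edge the boundary conditions read `u = c u'` with
`|c| = 1`, which leaves these boundary values unchanged.
-/

open Complex MeasureTheory Set Filter Topology
open scoped ComplexConjugate

theorem HasCompactSupport.comp_prodMkLeft {X Y E : Type*} [TopologicalSpace X] [R1Space X]
    [TopologicalSpace Y] [Zero E] {g : X × Y → E} (hg : HasCompactSupport g) (y : Y) :
    HasCompactSupport fun x => g (x, y) :=
  HasCompactSupport.intro (hg.image continuous_fst) fun _ hx =>
    image_eq_zero_of_notMem_tsupport fun h => hx ⟨_, h, rfl⟩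

theorem continuous_integral_of_forall_notMem_eq_zero {X Y E : Type*} [TopologicalSpace X]
    [FirstCountableTopology X] [LocallyCompactSpace X] [TopologicalSpace Y] [MeasurableSpace Y]
    [OpensMeasurableSpace Y] {μ : Measure Y} [IsLocallyFiniteMeasure μ]
    [NormedAddCommGroup E] [NormedSpace ℝ E] [SecondCountableTopologyEither Y E]
    {G : X → Y → E} (hG : Continuous (Function.uncurry G)) {K : Set Y} (hK : IsCompact K)
    (h0 : ∀ p, ∀ y ∉ K, G p y = 0) :
    Continuous fun p => ∫ y, G p y ∂μ := by
  have hK_int : (fun p => ∫ y, G p y ∂μ) = fun p => ∫ y in K, G p y ∂μ :=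
    funext fun p => (setIntegral_eq_integral_of_forall_compl_eq_zero (h0 p)).symm
  rw [hK_int]
  exact continuous_parametric_integral_of_continuous hG hK

theorem integral_intervalIntegral_eq_setIntegral_prod {E : Type*} [NormedAddCommGroup E]
    [NormedSpace ℝ E] {F : ℝ × ℝ → E} {a b : ℝ} (hab : a ≤ b)
    (hF : IntegrableOn F (univ ×ˢ Ioc a b)) :
    ∫ x, ∫ y in a..b, F (x, y) = ∫ p in univ ×ˢ Ioc a b, F p := by
  rw [IntegrableOn, Measure.volume_eq_prod, ← Measure.prod_restrict, Measure.restrict_univ] at hF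
  rw [Measure.volume_eq_prod, ← Measure.prod_restrict, Measure.restrict_univ]
  simp_rw [intervalIntegral.integral_of_le hab]
  exact (integral_prod F hF).symm

theorem intervalIntegral_integral_eq_setIntegral_prod {E : Type*} [NormedAddCommGroup E]
    [NormedSpace ℝ E] {F : ℝ × ℝ → E} {a b : ℝ} (hab : a ≤ b)
    (hF : IntegrableOn F (univ ×ˢ Ioc a b)) :
    ∫ y in a..b, ∫ x, F (x, y) = ∫ p in univ ×ˢ Ioc a b, F p := by
  rw [IntegrableOn, Measure.volume_eq_prod, ← Measure.prod_restrict, Measure.restrict_univ] at hF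
  rw [Measure.volume_eq_prod, ← Measure.prod_restrict, Measure.restrict_univ]
  rw [intervalIntegral.integral_of_le hab]
  exact (integral_prod_symm F hF).symm

theorem hasDerivAt_diag_of_symm {F : Type*} [NormedAddCommGroup F] [NormedSpace ℝ F]
    {φ D : ℝ → ℝ → F} (hφ : ∀ s t, φ s t = φ t s)
    (hD : ∀ s t, HasDerivAt (φ s ·) (D s t) t) {y : ℝ}
    (hc : ContinuousAt (Function.uncurry D) (y, y)) :
    HasDerivAt (fun s => φ s s) ((2 : ℝ) • D y y) y := by
  let f₁ : ℝ → ℝ → ℝ →L[ℝ] F := fun s t => ContinuousLinearMap.toSpanSingleton ℝ (D t s)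
  let f₂ : ℝ → ℝ → ℝ →L[ℝ] F := fun s t => ContinuousLinearMap.toSpanSingleton ℝ (D s t)
  have hc_swap : ContinuousAt (fun v : ℝ × ℝ => D v.2 v.1) (y, y) :=
    ContinuousAt.comp (x := (y, y)) (f := Prod.swap) (g := Function.uncurry D) hc
      continuous_swap.continuousAt
  have h := hasStrictFDerivAt_uncurry_coprod (f := φ) (f₁ := f₁) (f₂ := f₂) (u := (y, y))
    (Eventually.of_forall fun v => by
      simp_rw [hφ _ v.2]
      exact (hD v.2 v.1).hasFDerivAt)
    (Eventually.of_forall fun v => (hD v.1 v.2).hasFDerivAt)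
    (ContinuousLinearMap.toSpanSingletonCLE.continuous.continuousAt.comp hc_swap)
    (ContinuousLinearMap.toSpanSingletonCLE.continuous.continuousAt.comp hc)
  have := h.hasFDerivAt.comp_hasDerivAt (f := fun s : ℝ => (s, s)) y
    ((hasDerivAt_id y).prodMk (hasDerivAt_id y))
  change HasDerivAt _ (ContinuousLinearMap.toSpanSingleton ℝ (D y y) 1
    + ContinuousLinearMap.toSpanSingleton ℝ (D y y) 1) y at this
  rw [two_smul]
  simp only [ContinuousLinearMap.toSpanSingleton_apply, one_smul] at this
  exact this

theorem Continuous.integrable_norm_sq_of_hasCompactSupport {X E : Type*} [TopologicalSpace X]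
    [MeasurableSpace X] [OpensMeasurableSpace X] {μ : Measure X} [IsFiniteMeasureOnCompacts μ]
    [NormedAddCommGroup E] {g : X → E} (hg : Continuous g) (hgs : HasCompactSupport g) :
    Integrable (fun p => ‖g p‖ ^ 2) μ := by
  have hs : HasCompactSupport fun p => ‖g p‖ ^ 2 :=
    hgs.comp_left (g := fun z : E => ‖z‖ ^ 2) (by rw [norm_zero, sq, mul_zero])
  exact (hg.norm.pow 2).integrable_of_hasCompactSupport hs

theorem norm_I_mul_sub_sq (a b : ℂ) :
    ‖I * a - b‖ ^ 2 = ‖a‖ ^ 2 + ‖b‖ ^ 2 - 2 * (conj a * b).im := by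
  simp only [Complex.sq_norm, normSq_apply, sub_re, sub_im, mul_re, mul_im, I_re, I_im, conj_re,
    conj_im]
  ring

theorem norm_neg_I_mul_sub_sq (a b : ℂ) :
    ‖-(I * a) - b‖ ^ 2 = ‖a‖ ^ 2 + ‖b‖ ^ 2 + 2 * (conj a * b).im := by
  simp only [Complex.sq_norm, normSq_apply, sub_re, sub_im, neg_re, neg_im, mul_re, mul_im, I_re,
    I_im, conj_re, conj_im]
  ring

section SlicePairing

variable {f : ℝ × ℝ → ℂ}

theorem hasDerivAt_px (hf : Differentiable ℝ f) (x y : ℝ) :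
    HasDerivAt (fun t => f (t, y)) (px f (x, y)) x :=
  (hf (x, y)).hasFDerivAt.comp_hasDerivAt x ((hasDerivAt_id x).prodMk (hasDerivAt_const x y))

theorem hasDerivAt_py (hf : Differentiable ℝ f) (x y : ℝ) :
    HasDerivAt (fun t => f (x, t)) (py f (x, y)) y :=
  (hf (x, y)).hasFDerivAt.comp_hasDerivAt y ((hasDerivAt_const y x).prodMk (hasDerivAt_id y))

theorem continuous_px (hf : ContDiff ℝ 1 f) : Continuous (px f) :=
  (hf.continuous_fderiv one_ne_zero).clm_apply continuous_const

theorem continuous_py (hf : ContDiff ℝ 1 f) : Continuous (py f) :=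
  (hf.continuous_fderiv one_ne_zero).clm_apply continuous_const

theorem HasCompactSupport.px (hf : HasCompactSupport f) : HasCompactSupport (px f) :=
  hf.fderiv_apply ℝ (1, 0)

theorem HasCompactSupport.py (hf : HasCompactSupport f) : HasCompactSupport (py f) :=
  hf.fderiv_apply ℝ (0, 1)

noncomputable def slicePairing (f : ℝ × ℝ → ℂ) (s t : ℝ) : ℂ :=
  ∫ x, conj (px f (x, s)) * f (x, t)

theorem slicePairing_eq_neg_conj (hf : ContDiff ℝ 1 f) (hfs : HasCompactSupport f) (s t : ℝ) :
    slicePairing f s t = -conj (slicePairing f t s) := by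
  have hd : Differentiable ℝ f := hf.differentiable one_ne_zero
  have hc : Continuous f := hf.continuous
  have ibp := integral_mul_deriv_eq_deriv_mul_of_integrable
    (u := fun x => f (x, t)) (v := fun x => conj (f (x, s)))
    (u' := fun x => px f (x, t)) (v' := fun x => conj (px f (x, s)))
    (fun x _ => hasDerivAt_px hd x t) (fun x _ => (hasDerivAt_px hd x s).star)
    ?_ ?_ ?_
  · rw [slicePairing, slicePairing, ← integral_conj]
    simp only [map_mul, conj_conj]
    simpa only [mul_comm] using ibp
  all_goals
    refine Continuous.integrable_of_hasCompactSupport ?_ ?_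
  · exact (hc.comp (by fun_prop)).mul ((continuous_px hf).comp (by fun_prop)).star
  · exact (hfs.comp_prodMkLeft t).mul_right
  · exact ((continuous_px hf).comp (by fun_prop)).mul (hc.comp (by fun_prop)).star
  · exact (hfs.comp_prodMkLeft s).comp_left (g := conj) (map_zero _) |>.mul_left
  · exact (hc.comp (by fun_prop)).mul (hc.comp (by fun_prop)).star
  · exact (hfs.comp_prodMkLeft t).mul_right

theorem hasDerivAt_slicePairing_right (hf : ContDiff ℝ 1 f) (hfs : HasCompactSupport f)
    (s t : ℝ) :
    HasDerivAt (slicePairing f s ·) (∫ x, conj (px f (x, s)) * py f (x, t)) t := by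
  obtain ⟨C, hC⟩ := (continuous_py hf).bounded_above_of_compact_support hfs.py
  have hc : Continuous f := hf.continuous
  have hpx : Continuous fun x => px f (x, s) := (continuous_px hf).comp (by fun_prop)
  have hpxs : HasCompactSupport fun x => px f (x, s) := hfs.px.comp_prodMkLeft s
  refine (hasDerivAt_integral_of_dominated_loc_of_deriv_le (x₀ := t) univ_mem
    (F' := fun τ x => conj (px f (x, s)) * py f (x, τ)) (bound := fun x => ‖px f (x, s)‖ * C)
    (Eventually.of_forall fun τ => (hpx.star.mul (hc.comp (by fun_prop))).aestronglyMeasurable)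
    ((hpx.star.mul (hc.comp (by fun_prop))).integrable_of_hasCompactSupport
      (hpxs.comp_left (g := conj) (map_zero _)).mul_right)
    (hpx.star.mul ((continuous_py hf).comp (by fun_prop))).aestronglyMeasurable
    (ae_of_all _ fun x τ _ => ?_)
    ((hpx.integrable_of_hasCompactSupport hpxs).norm.mul_const C)
    (ae_of_all _ fun x τ _ => ((hasDerivAt_py (hf.differentiable one_ne_zero) x τ).const_mul _))).2
  rw [norm_mul, RCLike.norm_conj]
  exact mul_le_mul_of_nonneg_left (hC _) (norm_nonneg _)

theorem continuous_integral_conj_px_mul_py (hf : ContDiff ℝ 1 f) (hfs : HasCompactSupport f) :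
    Continuous fun p : ℝ × ℝ => ∫ x, conj (px f (x, p.1)) * py f (x, p.2) := by
  have hpx := continuous_px hf
  have hpy := continuous_py hf
  refine continuous_integral_of_forall_notMem_eq_zero
    (G := fun (p : ℝ × ℝ) (x : ℝ) => conj (px f (x, p.1)) * py f (x, p.2))
    (by simp only [Function.uncurry_def]; fun_prop) (hfs.px.image continuous_fst)
    fun p x hx => ?_
  rw [image_eq_zero_of_notMem_tsupport (fun h => hx ⟨_, h, rfl⟩), map_zero, zero_mul]

noncomputable def jacDet (f : ℝ × ℝ → ℂ) (p : ℝ × ℝ) : ℝ := (conj (px f p) * py f p).im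

theorem integral_jacDet_slice (hf : ContDiff ℝ 1 f) (hfs : HasCompactSupport f) (y : ℝ) :
    ∫ x, jacDet f (x, y) = (∫ x, conj (px f (x, y)) * py f (x, y)).im := by
  have hint : Integrable fun x => conj (px f (x, y)) * py f (x, y) :=
    (((continuous_px hf).comp (by fun_prop)).star.mul ((continuous_py hf).comp (by fun_prop))
      ).integrable_of_hasCompactSupport (hfs.py.comp_prodMkLeft y).mul_left
  exact imCLM.integral_comp_comm hint

theorem hasDerivAt_im_slicePairing_diag (hf : ContDiff ℝ 1 f) (hfs : HasCompactSupport f)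
    (y : ℝ) :
    HasDerivAt (fun s => (slicePairing f s s).im) (2 * ∫ x, jacDet f (x, y)) y := by
  rw [integral_jacDet_slice hf hfs, ← smul_eq_mul]
  refine hasDerivAt_diag_of_symm (φ := fun s t => (slicePairing f s t).im)
    (D := fun s t => (∫ x, conj (px f (x, s)) * py f (x, t)).im)
    (fun s t => by rw [slicePairing_eq_neg_conj hf hfs s t, neg_im, conj_im, neg_neg])
    (fun s t => ?_)
    (continuous_im.comp (continuous_integral_conj_px_mul_py hf hfs)).continuousAt
  exact imCLM.hasFDerivAt.comp_hasDerivAt t (hasDerivAt_slicePairing_right hf hfs s t)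

theorem integrable_jacDet (hf : ContDiff ℝ 1 f) (hfs : HasCompactSupport f) :
    Integrable (jacDet f) := by
  have := continuous_px hf
  have := continuous_py hf
  refine Continuous.integrable_of_hasCompactSupport (by unfold jacDet; fun_prop) ?_
  exact HasCompactSupport.intro hfs fun p hp => by simp [jacDet, px, fderiv_of_notMem_tsupport ℝ hp]

theorem two_mul_setIntegral_jacDet (hf : ContDiff ℝ 1 f) (hfs : HasCompactSupport f) {L : ℝ}
    (hL : 0 ≤ L) :
    2 * ∫ p in univ ×ˢ Ioc 0 L, jacDet f p = (slicePairing f L L).im - (slicePairing f 0 0).im := by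
  rw [← intervalIntegral_integral_eq_setIntegral_prod hL (integrable_jacDet hf hfs).integrableOn,
    ← intervalIntegral.integral_const_mul]
  refine intervalIntegral.integral_eq_sub_of_hasDerivAt
    (fun y _ => hasDerivAt_im_slicePairing_diag hf hfs y) (Continuous.intervalIntegrable ?_ _ _)
  simp_rw [integral_jacDet_slice hf hfs]
  exact continuous_const.mul (continuous_im.comp
    ((continuous_integral_conj_px_mul_py hf hfs).comp (continuous_id.prodMk continuous_id)))

theorem slicePairing_diag_eq_of_eq_mul {g : ℝ × ℝ → ℂ} (hf : Differentiable ℝ f)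
    (hg : Differentiable ℝ g) {c : ℂ} (hc : ‖c‖ = 1) {a : ℝ} (h : ∀ x, f (x, a) = c * g (x, a)) :
    slicePairing f a a = slicePairing g a a := by
  have hslice : (fun x => f (x, a)) = fun x => c * g (x, a) := funext h
  have hpx : ∀ x, px f (x, a) = c * px g (x, a) := fun x =>
    (hasDerivAt_px hf x a).unique (hslice ▸ (hasDerivAt_px hg x a).const_mul c)
  unfold slicePairing
  congr 1
  funext x
  calc conj (px f (x, a)) * f (x, a) = (conj c * c) * (conj (px g (x, a)) * g (x, a)) := by
        rw [hpx, h, map_mul]; ring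
    _ = conj (px g (x, a)) * g (x, a) := by rw [conj_mul', hc]; simp

theorem setIntegral_jacDet_eq_of_eq_mul {g : ℝ × ℝ → ℂ} (hf : ContDiff ℝ 1 f)
    (hfs : HasCompactSupport f) (hg : ContDiff ℝ 1 g) (hgs : HasCompactSupport g) {L : ℝ}
    (hL : 0 ≤ L) {c₀ c₁ : ℂ} (hc₀ : ‖c₀‖ = 1) (hc₁ : ‖c₁‖ = 1)
    (h₀ : ∀ x, f (x, 0) = c₀ * g (x, 0)) (h₁ : ∀ x, f (x, L) = c₁ * g (x, L)) :
    ∫ p in univ ×ˢ Ioc 0 L, jacDet f p = ∫ p in univ ×ˢ Ioc 0 L, jacDet g p := by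
  have hfd := hf.differentiable one_ne_zero
  have hgd := hg.differentiable one_ne_zero
  have hf_jac := two_mul_setIntegral_jacDet hf hfs hL
  have hg_jac := two_mul_setIntegral_jacDet hg hgs hL
  rw [slicePairing_diag_eq_of_eq_mul hfd hgd hc₀ h₀, slicePairing_diag_eq_of_eq_mul hfd hgd hc₁ h₁]
    at hf_jac
  linarith

end SlicePairing

open Complex Real MeasureTheory in
theorem stmt18 (L : ℝ) (hL : 0 < L) (u u' : ℝ × ℝ → ℂ)
    (hu : ContDiff ℝ 1 u) (hu' : ContDiff ℝ 1 u')
    -- decay at infinity along the strip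
    (hsupp : HasCompactSupport u) (hsupp' : HasCompactSupport u')
    -- boundary conditions at y = 0 and y = L
    (hbc0 : ∀ x : ℝ, u (x, 0) - I * u' (x, 0) = 0)
    (hbcL : ∀ x : ℝ, exp (-(I * (2 * π * L))) * u (x, L) - I * u' (x, L) = 0) :
    (∫ x : ℝ, ∫ y in (0 : ℝ)..L,
        (‖I * px u (x, y) - py u (x, y)‖ ^ 2 +
          ‖-(I * px u' (x, y)) - py u' (x, y)‖ ^ 2)) =
      ∫ x : ℝ, ∫ y in (0 : ℝ)..L,
        (‖px u (x, y)‖ ^ 2 + ‖py u (x, y)‖ ^ 2 +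
          ‖px u' (x, y)‖ ^ 2 + ‖py u' (x, y)‖ ^ 2) := by
  have hjac := setIntegral_jacDet_eq_of_eq_mul hu hsupp hu' hsupp' hL.le
    (c₀ := I) (c₁ := (exp (-(I * (2 * π * L))))⁻¹ * I) (by simp) (by simp [norm_exp])
    (fun x => sub_eq_zero.mp (hbc0 x))
    fun x => by
      rw [mul_assoc, ← sub_eq_zero.mp (hbcL x), inv_mul_cancel_left₀ (Complex.exp_ne_zero _)]
  set A : ℝ × ℝ → ℝ := fun p => ‖px u p‖ ^ 2 + ‖py u p‖ ^ 2 + ‖px u' p‖ ^ 2 + ‖py u' p‖ ^ 2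
  have hA : IntegrableOn A (univ ×ˢ Ioc 0 L) :=
    ((((continuous_px hu).integrable_norm_sq_of_hasCompactSupport hsupp.px).add
      ((continuous_py hu).integrable_norm_sq_of_hasCompactSupport hsupp.py)).add
      ((continuous_px hu').integrable_norm_sq_of_hasCompactSupport hsupp'.px)).add
      ((continuous_py hu').integrable_norm_sq_of_hasCompactSupport hsupp'.py) |>.integrableOn
  have hJ := (integrable_jacDet hu hsupp).integrableOn (s := univ ×ˢ Ioc 0 L)
  have hJ' := (integrable_jacDet hu' hsupp').integrableOn (s := univ ×ˢ Ioc 0 L)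
  have hcross : IntegrableOn (fun p => 2 * (jacDet u p - jacDet u' p)) (univ ×ˢ Ioc 0 L) :=
    (hJ.sub hJ').const_mul 2
  calc _ = ∫ x : ℝ, ∫ y in (0 : ℝ)..L,
        (A (x, y) - 2 * (jacDet u (x, y) - jacDet u' (x, y))) := by
        congr 1; funext x; congr 1; funext y
        rw [norm_I_mul_sub_sq, norm_neg_I_mul_sub_sq]
        simp only [A, jacDet]
        ring
    _ = ∫ p in univ ×ˢ Ioc 0 L, (A p - 2 * (jacDet u p - jacDet u' p)) :=
        integral_intervalIntegral_eq_setIntegral_prod hL.le (hA.sub hcross)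
    _ = ∫ p in univ ×ˢ Ioc 0 L, A p := by
        rw [integral_sub hA hcross, integral_const_mul, integral_sub hJ hJ',
          hjac, sub_self, mul_zero, sub_zero]
    _ = _ := (integral_intervalIntegral_eq_setIntegral_prod hL.le hA).symm
end
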